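/- Let G=(V,E) be a finite graph with positive edge weights W, let n = |V|, and let g: [0,1] → ℝ be a function such that every subset S ⊆ V satisfies w(S,S) ≥ g(|S|/n). Then for every ordering σ of V, SVC_G(σ) ≥ W(E) · Σ_{t=0}^{n−1} g(1 − t/n). -/

import Mathlib

/-- The position (in `{1, …, n}`) at which vertex `v` is visited by the ordering `σ`. -/
def vertexPos {V : Type*} [Fintype V] (σ : Fin (Fintype.card V) ≃ V) (v : V) : ℕ :=
  (σ.symm v : ℕ) + 1

/-- The cover time `c_{σ,e}` of an edge with endpoints `u` and `w` under the ordering `σ`. -/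
def coverTime {V : Type*} [Fintype V] (σ : Fin (Fintype.card V) ≃ V) (u w : V) : ℕ :=
  min (vertexPos σ u) (vertexPos σ w)

/-- The sum vertex cover value `SVC_G(σ) = Σ_e W_e · c_{σ,e}` of a weighted multigraph. -/
noncomputable def SVC {V ι : Type*} [Fintype V] [Fintype ι]
    (a b : ι → V) (W : ι → ℝ) (σ : Fin (Fintype.card V) ≃ V) : ℝ :=
  ∑ e : ι, W e * (coverTime σ (a e) (b e) : ℝ)

/-- The total weight of edges with both endpoints in the vertex set `S`. -/
noncomputable def weightWithin {V ι : Type*} [DecidableEq V] [Fintype ι]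
    (a b : ι → V) (W : ι → ℝ) (S : Finset V) : ℝ :=
  ∑ e ∈ Finset.univ.filter (fun e : ι => a e ∈ S ∧ b e ∈ S), W e

/-!
Layer-cake decomposition: an edge `e` is still uncovered at each of the times `t < c_{σ,e}`,
namely exactly when both of its endpoints lie in the set `S_t` of the `n - t` vertices visited
after time `t`. Summing over time instead of over edges gives `SVC_G(σ) = Σ_{t<n} W(S_t,S_t)`,
and the density hypothesis bounds each term by `W(E) · g(1 - t/n)`.
-/

open Finset

theorem Finset.sum_range_ite_lt {M : Type*} [AddCommMonoid M] {n c : ℕ} (hc : c ≤ n) (x : M) :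
    ∑ t ∈ range n, (if t < c then x else 0) = c • x := by
  rw [← sum_filter, show (range n).filter (· < c) = range c by ext; simp; omega, sum_const,
    card_range]

section Graph

variable {V ι : Type*}

theorem weightWithin_nonneg [DecidableEq V] [Fintype ι] (a b : ι → V) {W : ι → ℝ}
    (hW : ∀ e, 0 ≤ W e) (S : Finset V) : 0 ≤ weightWithin a b W S :=
  sum_nonneg fun e _ => hW e

section Ordering

variable [Fintype V] (σ : Fin (Fintype.card V) ≃ V)

def laterVertices (t : ℕ) : Finset V :=
  {v | t < vertexPos σ v}

theorem card_laterVertices (t : ℕ) : #(laterVertices σ t) = Fintype.card V - t := by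
  have hmap : laterVertices σ t =
      ({i : Fin (Fintype.card V) | ¬ (i : ℕ) < t} : Finset _).map σ.toEmbedding := by
    ext v
    simp [laterVertices, vertexPos]
  have hsplit := card_filter_add_card_filter_not (s := (univ : Finset (Fin (Fintype.card V))))
    (fun i => (i : ℕ) < t)
  rw [card_univ, Fintype.card_fin, Fin.card_filter_val_lt] at hsplit
  rw [hmap, card_map]
  omega

theorem one_sub_div_card_eq_card_laterVertices_div {t : ℕ} (ht : t < Fintype.card V) :
    1 - (t : ℝ) / Fintype.card V = #(laterVertices σ t) / Fintype.card V := by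
  have hn : (Fintype.card V : ℝ) ≠ 0 := Nat.cast_ne_zero.mpr (by omega)
  rw [card_laterVertices, Nat.cast_sub ht.le]
  field_simp

theorem lt_coverTime_iff {t : ℕ} {u w : V} :
    t < coverTime σ u w ↔ u ∈ laterVertices σ t ∧ w ∈ laterVertices σ t := by
  simp [coverTime, laterVertices]

theorem coverTime_le_card (u w : V) : coverTime σ u w ≤ Fintype.card V :=
  (min_le_left _ _).trans (σ.symm u).isLt

theorem SVC_eq_sum_weightWithin_laterVertices [DecidableEq V] [Fintype ι] (a b : ι → V)
    (W : ι → ℝ) :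
    SVC a b W σ = ∑ t ∈ range (Fintype.card V), weightWithin a b W (laterVertices σ t) := by
  simp only [weightWithin, sum_filter, ← lt_coverTime_iff]
  rw [sum_comm]
  refine sum_congr rfl fun e _ => ?_
  rw [sum_range_ite_lt (coverTime_le_card σ _ _), nsmul_eq_mul, mul_comm]

end Ordering

end Graph

/-- Let `G` be a finite graph with positive edge weights, `n = |V|`, and let
`g : [0,1] → ℝ` be such that every `S ⊆ V` satisfies `w(S,S) ≥ g(|S|/n)`.  Then every
ordering `σ` satisfies `SVC_G(σ) ≥ W(E) · Σ_{t=0}^{n−1} g(1 − t/n)`. -/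
theorem svc_density_lower_bound {V ι : Type*} [Fintype V] [DecidableEq V] [Fintype ι]
    (a b : ι → V) (W : ι → ℝ) (hW : ∀ e, 0 < W e) (g : ℝ → ℝ)
    (hdense : ∀ S : Finset V,
      g ((S.card : ℝ) / (Fintype.card V : ℝ)) ≤ weightWithin a b W S / ∑ e : ι, W e)
    (σ : Fin (Fintype.card V) ≃ V) :
    (∑ e : ι, W e) *
        ∑ t ∈ Finset.range (Fintype.card V), g (1 - (t : ℝ) / (Fintype.card V : ℝ)) ≤
      SVC a b W σ := by
  have hW₀ : ∀ e, 0 ≤ W e := fun e => (hW e).le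
  rw [SVC_eq_sum_weightWithin_laterVertices, mul_sum]
  refine sum_le_sum fun t ht => ?_
  rw [mul_comm, one_sub_div_card_eq_card_laterVertices_div σ (mem_range.mp ht)]
  exact mul_le_of_le_div₀ (weightWithin_nonneg a b hW₀ _) (sum_nonneg fun e _ => hW₀ e)
    (hdense _)
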